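/- Let G = L(K(n,2)) for n ≥ 3 with adjacency matrix A (a 2n × 2n matrix). Then (A³ + (4−n)A² − 2(n−2)A)/(n+2) = J, where J is the 2n × 2n all-ones matrix. -/

import Mathlib

/-
The edges of `K(V,W)` are the pairs `(v, w)`, two of them meeting iff they agree in exactly one
coordinate, so `L(K(V,W))` is the rook's graph `K_V □ K_W` and its adjacency matrix satisfies
`A + 2 = X + Y` with `X = J ⊗ 1`, `Y = 1 ⊗ J`. These commute, `X² = |V| X`, `Y² = |W| Y` and
`XY = J`; since `X (X - |V|) = 0 = Y (Y - |W|)`, expanding gives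
`(X + Y)(X + Y - |V|)(X + Y - |W|) = (|V| + |W|) XY`, i.e.
`(A + 2)(A - (|V| - 2))(A - (|W| - 2)) = (|V| + |W|) J`. For `|W| = 2` the left side is
`A³ + (4 - n) A² - 2(n - 2) A`.
-/

open SimpleGraph
open scoped Classical

/-- A graph is 2-variegated (bivariegated) if its vertex set can be partitioned into
two equinumerous parts such that every vertex is adjacent to exactly one vertex
of the part not containing it. -/
def SimpleGraph.IsBivariegated {V : Type*} (G : SimpleGraph V) : Prop :=
  ∃ f : V → Bool,
    Nonempty ({v // f v = true} ≃ {v // f v = false}) ∧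
    ∀ v : V, ∃! w : V, f w ≠ f v ∧ G.Adj v w
/-- The adjacency matrix of the line graph of `K(n,2)` over the reals. -/
noncomputable def adjLKn2 (n : ℕ) :
    Matrix (completeBipartiteGraph (Fin n) (Fin 2)).edgeSet
      (completeBipartiteGraph (Fin n) (Fin 2)).edgeSet ℝ :=
  ((completeBipartiteGraph (Fin n) (Fin 2)).lineGraph).adjMatrix ℝ

open Matrix Kronecker

section Algebra

variable {K R : Type*} [CommRing K] [Ring R] [Algebra K R] {X Y : R} {m k : K}

theorem Commute.add_mul_add_sub_mul_add_sub (hXY : Commute X Y) (hX : X * X = m • X)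
    (hY : Y * Y = k • Y) :
    (X + Y) * (X + Y - m • 1) * (X + Y - k • 1) = (m + k) • (X * Y) := by
  have hXm : X * (X - m • 1) = 0 := by rw [mul_sub, hX, mul_smul_comm, mul_one, sub_self]
  have hYk : Y * (Y - k • 1) = 0 := by rw [mul_sub, hY, mul_smul_comm, mul_one, sub_self]
  have hfactor : (X + Y - m • 1) * (X + Y - k • 1) = (X - m • 1) * (Y - k • 1) + X * Y := by
    simp only [add_mul, sub_mul, mul_add, mul_sub, smul_mul_assoc, mul_smul_comm, one_mul,
      mul_one, hX, hY, hXY.eq]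
    module
  have hkill : (X + Y) * ((X - m • 1) * (Y - k • 1)) = 0 := by
    have hYX : Commute Y (X - m • 1) := hXY.symm.sub_right ((Commute.one_right Y).smul_right m)
    rw [add_mul, ← mul_assoc, hXm, zero_mul, ← mul_assoc, hYX.eq, mul_assoc, hYk, mul_zero,
      add_zero]
  rw [mul_assoc, hfactor, mul_add, hkill, zero_add, add_mul, ← mul_assoc, hX,
    hXY.symm.left_comm, hY, smul_mul_assoc, mul_smul_comm, add_smul]

end Algebra

namespace Matrix

variable {α V W : Type*} [CommRing α]

theorem of_one_kronecker_of_one : (of 1 : Matrix V V α) ⊗ₖ (of 1 : Matrix W W α) = of 1 := by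
  ext; simp

variable [Fintype V] [Fintype W]

theorem of_one_mul_of_one : (of 1 : Matrix V V α) * of 1 = (Fintype.card V : α) • of 1 := by
  ext; simp [mul_apply]

theorem of_one_kronecker_one_mul_self [DecidableEq W] :
    (of 1 ⊗ₖ 1 : Matrix (V × W) (V × W) α) * (of 1 ⊗ₖ 1) =
      (Fintype.card V : α) • (of 1 ⊗ₖ 1) := by
  rw [← mul_kronecker_mul, of_one_mul_of_one, one_mul, smul_kronecker]

theorem one_kronecker_of_one_mul_self [DecidableEq V] :
    (1 ⊗ₖ of 1 : Matrix (V × W) (V × W) α) * (1 ⊗ₖ of 1) =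
      (Fintype.card W : α) • (1 ⊗ₖ of 1) := by
  rw [← mul_kronecker_mul, of_one_mul_of_one, one_mul, kronecker_smul]

theorem of_one_kronecker_one_mul_one_kronecker_of_one [DecidableEq V] [DecidableEq W] :
    (of 1 ⊗ₖ 1 : Matrix (V × W) (V × W) α) * (1 ⊗ₖ of 1) = of 1 := by
  rw [← mul_kronecker_mul, mul_one, one_mul, of_one_kronecker_of_one]

theorem commute_of_one_kronecker_one_one_kronecker_of_one [DecidableEq V] [DecidableEq W] :
    Commute (of 1 ⊗ₖ 1 : Matrix (V × W) (V × W) α) (1 ⊗ₖ of 1) := by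
  rw [Commute, SemiconjBy, ← mul_kronecker_mul, ← mul_kronecker_mul, mul_one, one_mul,
    mul_one, one_mul]

end Matrix

namespace SimpleGraph

variable {α V W : Type*}

variable (V W) in
noncomputable def completeBipartiteGraphEdgeEquiv : V × W ≃ (completeBipartiteGraph V W).edgeSet :=
  (Equiv.ofInjective (fun x : V × W ↦ s(Sum.inl x.1, Sum.inr x.2))
    (fun x y h ↦ by simpa [Prod.ext_iff] using h)).trans
    (Equiv.setCongr edgeSet_completeBipartiteGraph.symm)

@[simp]
theorem coe_completeBipartiteGraphEdgeEquiv_apply (x : V × W) :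
    (completeBipartiteGraphEdgeEquiv V W x : Sym2 (V ⊕ W)) = s(Sum.inl x.1, Sum.inr x.2) := rfl

variable (V W) in
noncomputable def boxProdTopIsoLineGraphCompleteBipartiteGraph :
    (⊤ : SimpleGraph V).boxProd (⊤ : SimpleGraph W) ≃g (completeBipartiteGraph V W).lineGraph where
  toEquiv := completeBipartiteGraphEdgeEquiv V W
  map_rel_iff' := by
    simp [lineGraph_adj_iff_exists, Prod.ext_iff]
    tauto

theorem adjMatrix_boxProd [NonAssocSemiring α] [DecidableEq V] [DecidableEq W]
    (G : SimpleGraph V) (H : SimpleGraph W) [DecidableRel G.Adj] [DecidableRel H.Adj]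
    [DecidableRel (G.boxProd H).Adj] :
    (G.boxProd H).adjMatrix α = G.adjMatrix α ⊗ₖ 1 + 1 ⊗ₖ H.adjMatrix α := by
  ext ⟨a, b⟩ ⟨a', b'⟩
  rcases eq_or_ne a a' with rfl | ha <;> rcases eq_or_ne b b' with rfl | hb <;>
    simp [adjMatrix_apply, one_apply, *]

theorem adjMatrix_boxProd_top_top_add_two [CommRing α] [DecidableEq V] [DecidableEq W]
    [DecidableRel ((⊤ : SimpleGraph V).boxProd (⊤ : SimpleGraph W)).Adj] :
    ((⊤ : SimpleGraph V).boxProd (⊤ : SimpleGraph W)).adjMatrix α + (2 : α) • 1 =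
      of 1 ⊗ₖ 1 + 1 ⊗ₖ of 1 := by
  have hV : (of 1 : Matrix V V α) = (⊤ : SimpleGraph V).adjMatrix α + 1 :=
    sub_eq_iff_eq_add.mp (adjMatrix_completeGraph_eq_of_one_sub_one α V).symm
  have hW : (of 1 : Matrix W W α) = (⊤ : SimpleGraph W).adjMatrix α + 1 :=
    sub_eq_iff_eq_add.mp (adjMatrix_completeGraph_eq_of_one_sub_one α W).symm
  rw [adjMatrix_boxProd, hV, hW, add_kronecker, kronecker_add, one_kronecker_one]
  module

theorem adjMatrix_boxProd_top_top_cubic [CommRing α] [Fintype V] [Fintype W]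
    [DecidableEq V] [DecidableEq W]
    [DecidableRel ((⊤ : SimpleGraph V).boxProd (⊤ : SimpleGraph W)).Adj] :
    (((⊤ : SimpleGraph V).boxProd (⊤ : SimpleGraph W)).adjMatrix α + (2 : α) • 1) *
        (((⊤ : SimpleGraph V).boxProd (⊤ : SimpleGraph W)).adjMatrix α -
          ((Fintype.card V : α) - 2) • 1) *
        (((⊤ : SimpleGraph V).boxProd (⊤ : SimpleGraph W)).adjMatrix α -
          ((Fintype.card W : α) - 2) • 1) =
      ((Fintype.card V : α) + Fintype.card W) • of 1 := by
  rw [eq_sub_of_add_eq (adjMatrix_boxProd_top_top_add_two (α := α)),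
    ← of_one_kronecker_one_mul_one_kronecker_of_one,
    ← commute_of_one_kronecker_one_one_kronecker_of_one.add_mul_add_sub_mul_add_sub
      of_one_kronecker_one_mul_self one_kronecker_of_one_mul_self, sub_add_cancel]
  congr 1
  · congr 1
    module
  · module

variable (α V W) in
theorem adjMatrix_lineGraph_completeBipartiteGraph_cubic [CommRing α] [Fintype V] [Fintype W]
    [DecidableEq V] [DecidableEq W] [DecidableRel (completeBipartiteGraph V W).lineGraph.Adj] :
    ((completeBipartiteGraph V W).lineGraph.adjMatrix α + (2 : α) • 1) *
        ((completeBipartiteGraph V W).lineGraph.adjMatrix α - ((Fintype.card V : α) - 2) • 1) *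
        ((completeBipartiteGraph V W).lineGraph.adjMatrix α - ((Fintype.card W : α) - 2) • 1) =
      ((Fintype.card V : α) + Fintype.card W) • of 1 := by
  let φ := reindexAlgEquiv α α (completeBipartiteGraphEdgeEquiv V W)
  have hφ : φ (of 1) = of 1 := by ext; simp [φ]
  have hbox := congrArg φ (adjMatrix_boxProd_top_top_cubic (α := α) (V := V) (W := W))
  simp only [map_mul, map_sub, map_add, map_smul, map_one, hφ, φ, coe_reindexAlgEquiv] at hbox
  rw [← (boxProdTopIsoLineGraphCompleteBipartiteGraph V W).reindex_adjMatrix (α := α)]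
  exact hbox

end SimpleGraph

theorem adjLKn2_polynomial_eq_allOnes_general (n : ℕ) :
    ((n : ℝ) + 2)⁻¹ • ((adjLKn2 n) ^ 3 + ((4 : ℝ) - n) • (adjLKn2 n) ^ 2
        - (2 * ((n : ℝ) - 2)) • adjLKn2 n)
      = Matrix.of fun _ _ => (1 : ℝ) := by
  have hfactor := adjMatrix_lineGraph_completeBipartiteGraph_cubic ℝ (Fin n) (Fin 2)
  simp only [Fintype.card_fin, Nat.cast_ofNat, sub_self, zero_smul, sub_zero] at hfactor
  have hexpand : adjLKn2 n ^ 3 + ((4 : ℝ) - n) • adjLKn2 n ^ 2 - (2 * ((n : ℝ) - 2)) • adjLKn2 n =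
      (adjLKn2 n + (2 : ℝ) • 1) * (adjLKn2 n - ((n : ℝ) - 2) • 1) * adjLKn2 n := by
    simp only [pow_three', pow_two, add_mul, sub_mul, mul_sub, smul_mul_assoc, mul_smul_comm,
      one_mul, mul_one]
    module
  rw [hexpand, adjLKn2, hfactor, smul_smul, inv_mul_cancel₀ (by positivity), one_smul]
  rfl

theorem adjLKn2_polynomial_eq_allOnes (n : ℕ) (hn : 3 ≤ n) :
    ((n : ℝ) + 2)⁻¹ • ((adjLKn2 n) ^ 3 + ((4 : ℝ) - n) • (adjLKn2 n) ^ 2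
        - (2 * ((n : ℝ) - 2)) • adjLKn2 n)
      = Matrix.of fun _ _ => (1 : ℝ) :=
  adjLKn2_polynomial_eq_allOnes_general n
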